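/- arXiv:0810.2746 — 2 statements merged into one kernel-verified Lean document; each statement's English description precedes it below -/
import Mathlib

section
/- For c > 0 and r ∈ (0,1), the finite-SNR diversity d(r,E) = c(1 + rE(1+E)^{r−1} − (1+E)^r)/(E(1 − exp(c((1+E)^r − 1)/E))) is nonnegative for all E > 0. -/
open Real

/-- The tangent line of the concave map `x ↦ x ^ r` at `x` lies above its graph at `1`. -/
theorem one_add_mul_sub_one_mul_rpow_sub_one_le_rpow {x r : ℝ} (hx : 0 < x) (hr0 : 0 ≤ r)
    (hr1 : r ≤ 1) : 1 + r * (x - 1) * x ^ (r - 1) ≤ x ^ r := by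
  have hxr : 0 < x ^ r := rpow_pos_of_pos hx r
  -- Bernoulli's inequality at `1 + s = x⁻¹`, multiplied through by `x ^ r`.
  have hbernoulli : (x ^ r)⁻¹ ≤ 1 + r * (x⁻¹ - 1) := by
    have h := rpow_one_add_le_one_add_mul_self (s := x⁻¹ - 1)
      (by linarith [inv_pos.2 hx]) hr0 hr1
    rwa [add_sub_cancel, inv_rpow hx.le] at h
  have hrpow_sub_one : x ^ (r - 1) = x ^ r * x⁻¹ := by rw [rpow_sub hx, rpow_one, div_eq_mul_inv]
  calc 1 + r * (x - 1) * x ^ (r - 1)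
      = x ^ r * (x ^ r)⁻¹ - x ^ r * (r * (x⁻¹ - 1)) := by
        rw [hrpow_sub_one, mul_inv_cancel₀ hxr.ne']; field_simp; ring
    _ ≤ x ^ r * (1 + r * (x⁻¹ - 1)) - x ^ r * (r * (x⁻¹ - 1)) := by gcongr
    _ = x ^ r := by ring

theorem anc_diversity_nonneg
    (c r : ℝ) (hc : 0 < c) (hr0 : 0 < r) (hr1 : r < 1) :
    ∀ E : ℝ, 0 < E →
      0 ≤ c * (1 + r * E * (1 + E) ^ (r - 1) - (1 + E) ^ r) /
          (E * (1 - Real.exp (c * ((1 + E) ^ r - 1) / E))) := by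
  intro E hE
  have htangent := one_add_mul_sub_one_mul_rpow_sub_one_le_rpow
    (show 0 < 1 + E by linarith) hr0.le hr1.le
  rw [add_sub_cancel_left] at htangent
  have hnum : c * (1 + r * E * (1 + E) ^ (r - 1) - (1 + E) ^ r) ≤ 0 :=
    mul_nonpos_of_nonneg_of_nonpos hc.le (by linarith)
  have hgrowth : 1 < (1 + E) ^ r := one_lt_rpow (by linarith) hr0
  have hexp : 1 < exp (c * ((1 + E) ^ r - 1) / E) :=
    one_lt_exp_iff.2 (div_pos (mul_pos hc (by linarith)) hE)
  have hden : E * (1 - exp (c * ((1 + E) ^ r - 1) / E)) ≤ 0 :=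
    mul_nonpos_of_nonneg_of_nonpos hE.le (by linarith)
  exact div_nonneg_of_nonpos hnum hden
end

section
/- Let μ₁(E) = 2(Ωh+Ωf)(E/(2√(1+E)) + 1 − √(1+E)) / (EΩhΩf(1 − c₁(E))) with c₁(E) = exp(2(Ωh+Ωf)(√(1+E) − 1)/(EΩhΩf)). Then μ₁(E) → 1/2 as E → ∞. -/
/-!
Put `a = 2(Ωh + Ωf)/(Ωh Ωf)` and `s = √(1 + E)`, so that `E = (s - 1)(s + 1)`. The numerator is
`-a (s - 1)² / (2s)` and the exponent is `x = a / (s + 1)`, hence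
`μ₁(E) = (1 - 1/s)/2 · x / (eˣ - 1)`. As `E → ∞` we have `s → ∞` and `x → 0`, so the first
factor tends to `1/2` and the second to `1 / exp' 0 = 1`.
-/

open Real Filter Topology

theorem tendsto_exp_sub_one_div_nhdsNE :
    Tendsto (fun x : ℝ => (exp x - 1) / x) (𝓝[≠] 0) (𝓝 1) := by
  have h := hasDerivAt_exp 0
  rw [hasDerivAt_iff_tendsto_slope] at h
  simpa [slope_fun_def_field] using h

theorem tendsto_sqrt_one_add_atTop : Tendsto (fun E : ℝ => √(1 + E)) atTop atTop :=
  tendsto_sqrt_atTop.comp (tendsto_atTop_add_const_left _ 1 tendsto_id)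

theorem mu1_eq_div_exp_slope {a E : ℝ} (ha : a ≠ 0) (hE : 0 < E) :
    a * (E / (2 * √(1 + E)) + 1 - √(1 + E)) / (E * (1 - exp (a * (√(1 + E) - 1) / E))) =
      (1 - 1 / √(1 + E)) / 2 / ((exp (a / (√(1 + E) + 1)) - 1) / (a / (√(1 + E) + 1))) := by
  obtain ⟨s, hs⟩ : ∃ s, s = √(1 + E) := ⟨_, rfl⟩
  rw [← hs]
  have hs1 : 1 < s := by
    rw [hs, lt_sqrt zero_le_one]
    linarith
  have hE_eq : E = (s - 1) * (s + 1) := by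
    have := sq_sqrt (show 0 ≤ 1 + E by linarith)
    rw [← hs] at this
    linear_combination -this
  subst hE_eq
  have hs_sub : s - 1 ≠ 0 := by linarith
  have hs_add : s + 1 ≠ 0 := by linarith
  have hexp_arg : a * (s - 1) / ((s - 1) * (s + 1)) = a / (s + 1) := by
    field_simp
  have hexp_ne : exp (a / (s + 1)) - 1 ≠ 0 := by
    rw [sub_ne_zero, Ne, exp_eq_one_iff]
    exact div_ne_zero ha hs_add
  rw [hexp_arg]
  have hexp_ne' : 1 - exp (a / (s + 1)) ≠ 0 := fun h => hexp_ne (by linarith)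
  field_simp
  ring

theorem tendsto_mu1_atTop {a : ℝ} (ha : a ≠ 0) :
    Tendsto (fun E : ℝ => a * (E / (2 * √(1 + E)) + 1 - √(1 + E)) /
      (E * (1 - exp (a * (√(1 + E) - 1) / E)))) atTop (𝓝 (1 / 2)) := by
  have hs := tendsto_sqrt_one_add_atTop
  have hfactor : Tendsto (fun E : ℝ => (1 - 1 / √(1 + E)) / 2) atTop (𝓝 (1 / 2)) := by
    have h := ((tendsto_const_nhds (x := (1 : ℝ))).sub
      ((tendsto_const_nhds (x := (1 : ℝ))).div_atTop hs)).div_const 2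
    rwa [sub_zero] at h
  have hx : Tendsto (fun E : ℝ => a / (√(1 + E) + 1)) atTop (𝓝[≠] 0) := by
    refine tendsto_nhdsWithin_iff.2 ⟨tendsto_const_nhds.div_atTop
      (tendsto_atTop_add_const_right _ 1 hs), Eventually.of_forall fun E => ?_⟩
    exact div_ne_zero ha (by positivity)
  have hlim := hfactor.div (tendsto_exp_sub_one_div_nhdsNE.comp hx) one_ne_zero
  rw [div_one] at hlim
  refine hlim.congr' ?_
  filter_upwards [eventually_gt_atTop 0] with E hE
  exact (mu1_eq_div_exp_slope ha hE).symm

theorem mu1_tendsto_half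
    (Ωh Ωf : ℝ) (hΩh : 0 < Ωh) (hΩf : 0 < Ωf) :
    Tendsto
      (fun E : ℝ =>
        2 * (Ωh + Ωf) * (E / (2 * Real.sqrt (1 + E)) + 1 - Real.sqrt (1 + E)) /
          (E * Ωh * Ωf *
            (1 - Real.exp (2 * (Ωh + Ωf) * (Real.sqrt (1 + E) - 1) / (E * Ωh * Ωf)))))
      atTop (nhds (1/2)) := by
  have ha : 2 * (Ωh + Ωf) / (Ωh * Ωf) ≠ 0 := by positivity
  refine (tendsto_mu1_atTop ha).congr fun E => ?_
  rw [show 2 * (Ωh + Ωf) / (Ωh * Ωf) * (√(1 + E) - 1) / E =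
    2 * (Ωh + Ωf) * (√(1 + E) - 1) / (E * Ωh * Ωf) by ring]
  generalize 1 - exp (2 * (Ωh + Ωf) * (√(1 + E) - 1) / (E * Ωh * Ωf)) = X
  ring
end
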